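/- Let A be a brace of cardinality p^n with p > n + 1 prime, and fix ℘⁻¹ : pA → A with p·℘⁻¹(a) = a. Then the operation [a] ⊙ [b] = [℘⁻¹((pa) * b)] is a well-defined binary operation on A/ann(p²): it does not depend on the choice of coset representatives a, b. -/

import Mathlib

/-!
Put `λ_x = x ∘ (·) - x`; it is additive, `λ_{x ∘ y} = λ_x λ_y`, and `x * b = (λ_x - 1) b`.
Since `(A, ∘)` is a `p`-group acting on `(A, +)` through `λ`, the left series
`A ⊇ A * A ⊇ A * (A * A) ⊇ ⋯` strictly decreases until it vanishes, so `(λ_x - 1) ^ n = 0`.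
As `n < p`, the binomial expansion of `λ_x ^ p` gives `λ_{x^{∘p}} ≡ 1 (mod p)`, and `x^{∘p} = 0`
when `p x = 0`, whence `p (λ_u - 1) = 0` for `u ∈ A[p]`. Writing `p a = a^{∘p} ∘ p a₁` with `a₁`
one step deeper in the left series, induction gives `λ_{p a} ≡ 1 (mod p)`: so `(p a) * b ∈ pA` and
`(p a) * A[p] = 0`. Hence `p² ℘⁻¹((p a) * b) = (p a) * (p b)`, and this depends only on `p a` and
`p b` modulo `A[p]`.
-/

/-- A left brace: an abelian group `(A,+)` together with a group operation `circ`
(whose identity is `0`) satisfying `a ∘ (b + c) + a = a ∘ b + a ∘ c`. -/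
structure LeftBrace (A : Type*) [AddCommGroup A] where
  circ : A → A → A
  inv : A → A
  circ_assoc : ∀ a b c, circ (circ a b) c = circ a (circ b c)
  circ_zero : ∀ a, circ a 0 = a
  zero_circ : ∀ a, circ 0 a = a
  inv_circ : ∀ a, circ (inv a) a = 0
  compat : ∀ a b c, circ a (b + c) + a = circ a b + circ a c

namespace LeftBrace

variable {A : Type*} [AddCommGroup A]

/-- The star operation `a * b = a ∘ b - a - b`. -/
def star (B : LeftBrace A) (a b : A) : A := B.circ a b - a - b

/-- `circPow B a n` is the product `a ∘ a ∘ ⋯ ∘ a` of `n` copies of `a`. -/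
def circPow (B : LeftBrace A) (a : A) : ℕ → A
  | 0 => 0
  | n + 1 => B.circ a (B.circPow a n)

end LeftBrace

open Finset Polynomial

-- `∑_{k<p} (X+1)^k = ∑_{j<p} C(p, j+1) X^j`, with `C(p, 1) = p` and `p ∣ C(p, j+1)` for `j < p - 1`.
theorem exists_sum_range_X_add_one_pow_eq {p : ℕ} (hp : p.Prime) :
    ∃ T : ℤ[X], ∑ k ∈ range p, (X + 1) ^ k = X ^ (p - 1) + (p : ℤ[X]) * (1 + X * T) := by
  obtain ⟨r, hr⟩ := exists_add_pow_prime_eq hp (X : ℤ[X]) 1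
  have hr0 : r.coeff 0 = 1 := by
    have h := congrArg (coeff · 1) hr
    simp only [coeff_X_add_one_pow, mul_assoc, coeff_add, coeff_X_pow, one_pow, coeff_one,
      coeff_natCast_mul, one_mul, coeff_X_mul, Nat.choose_one_right, Nat.one_ne_zero,
      if_false, (Ne.symm hp.one_lt.ne'), zero_add] at h
    exact (mul_right_eq_self₀.mp h.symm).resolve_right (by exact_mod_cast hp.ne_zero)
  obtain ⟨T, hT⟩ : X ∣ r - 1 := X_dvd_iff.mpr (by simp [hr0])
  refine ⟨T, mul_right_cancel₀ (X_ne_zero (R := ℤ)) ?_⟩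
  have hgeom := geom_sum_mul (X + 1 : ℤ[X]) p
  rw [add_sub_cancel_right] at hgeom
  rw [hgeom, hr, eq_add_of_sub_eq' hT, add_mul, ← pow_succ, Nat.sub_add_cancel hp.one_le]
  ring

section Ring

variable {R : Type*} [Ring R] {p : ℕ}

theorem commute_aeval_self (f : R) (T : ℤ[X]) : Commute f (aeval f T) := by
  simpa using (commute_X T).map (aeval f)

theorem exists_sum_range_pow_eq (hp : p.Prime) {g : R} (hg : (g - 1) ^ (p - 1) = 0) :
    ∃ T : ℤ[X], ∑ k ∈ range p, g ^ k = p * (1 + (g - 1) * aeval (g - 1) T) := by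
  obtain ⟨T, hT⟩ := exists_sum_range_X_add_one_pow_eq hp
  exact ⟨T, by simpa [hg] using congrArg (aeval (g - 1)) hT⟩

theorem pow_eq_one_add_of_sum_range_pow_eq {g w : R} (hw : ∑ k ∈ range p, g ^ k = p * w) :
    g ^ p = 1 + p * w * (g - 1) := by
  rw [← hw, geom_sum_mul, add_sub_cancel]

theorem natCast_mul_sub_one_eq_zero_of_pow_eq_one (hp : p.Prime) {g : R}
    (hg : (g - 1) ^ (p - 1) = 0) (h : g ^ p = 1) : (p : R) * (g - 1) = 0 := by
  obtain ⟨T, hT⟩ := exists_sum_range_pow_eq hp hg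
  set f := g - 1
  have hcomm : Commute (1 + f * aeval f T) f :=
    (Commute.one_left f).add_left ((Commute.refl f).mul_left (commute_aeval_self f T).symm)
  have hunit : IsUnit (1 + f * aeval f T) :=
    ((commute_aeval_self f T).isNilpotent_mul_right ⟨p - 1, hg⟩).isUnit_one_add
  rw [pow_eq_one_add_of_sum_range_pow_eq hT, add_eq_left, mul_assoc, hcomm.eq, ← mul_assoc] at h
  exact hunit.mul_left_eq_zero.mp h

end Ring

theorem Set.MapsTo.aeval {A : Type*} [AddCommGroup A] {H : AddSubgroup A}
    {f : AddMonoid.End A} (hf : Set.MapsTo f H H) (T : ℤ[X]) : Set.MapsTo (aeval f T) H H := by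
  induction T using Polynomial.induction_on with
  | C a =>
    intro v hv
    rw [aeval_C, algebraMap_int_eq, eq_intCast, AddMonoid.End.intCast_apply]
    exact zsmul_mem hv a
  | add P Q hP hQ =>
    intro v hv
    rw [map_add]
    exact add_mem (hP hv) (hQ hv)
  | monomial k a ih =>
    intro v hv
    rw [pow_succ, ← mul_assoc, map_mul, aeval_X]
    exact ih (hf hv)

-- A nontrivial character of `V` fixed by `G` exists since `p` divides the number of characters,
-- and it kills every `g • v - v`.
theorem IsPGroup.closure_smul_sub_ne_top {p : ℕ} [Fact p.Prime] {G V : Type*} [Group G]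
    [AddCommGroup V] [Finite V] [DistribMulAction G V] (hG : IsPGroup p G)
    (hV : p ∣ Nat.card V) :
    AddSubgroup.closure {z : V | ∃ (g : G) (v : V), g • v - v = z} ≠ ⊤ := by
  have := Fintype.ofFinite V
  let _ : MulAction G (AddChar V ℂ) :=
    { smul g ψ := ψ.compAddMonoidHom (DistribSMul.toAddMonoidHom V g⁻¹)
      one_smul ψ := by
        ext v
        change ψ ((1 : G)⁻¹ • v) = ψ v
        rw [inv_one, one_smul]
      mul_smul g h ψ := by
        ext v
        change ψ ((g * h)⁻¹ • v) = ψ (h⁻¹ • g⁻¹ • v)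
        rw [mul_inv_rev, mul_smul] }
  have hcard : p ∣ Nat.card (AddChar V ℂ) := by
    rwa [Nat.card_eq_fintype_card, AddChar.card_eq, ← Nat.card_eq_fintype_card]
  obtain ⟨ψ, hψ, hψ1⟩ := hG.exists_fixed_point_of_prime_dvd_card_of_fixed_point _ hcard
    (a := 1) fun g => by ext v; rfl
  have hψg (g : G) (v : V) : ψ (g • v) = ψ v := by
    have h := DFunLike.congr_fun (hψ g⁻¹) v
    change ψ (g⁻¹⁻¹ • v) = ψ v at h
    rwa [inv_inv] at h
  intro htop
  refine hψ1.symm (AddChar.ext _ _ fun v => ?_)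
  induction (htop ▸ AddSubgroup.mem_top v : v ∈ AddSubgroup.closure _) using
    AddSubgroup.closure_induction with
  | mem _ h =>
    obtain ⟨g, v, rfl⟩ := h
    rw [AddChar.map_sub_eq_div, hψg, div_self (ψ.val_isUnit v).ne_zero, AddChar.one_apply]
  | zero => simp
  | add _ _ _ _ h₁ h₂ => simp [AddChar.map_add_eq_mul, ← h₁, ← h₂]
  | neg _ _ h => simp [AddChar.map_neg_eq_inv, ← h]

theorem AddSubgroup.card_mul_dvd_card_of_lt {G : Type*} [AddGroup G] {p m : ℕ} (hp : p.Prime)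
    {H K : AddSubgroup G} [Finite K] (hK : Nat.card K ∣ p ^ m) (h : H < K) :
    Nat.card H * p ∣ Nat.card K := by
  obtain ⟨a, -, ha⟩ := (Nat.dvd_prime_pow hp).mp hK
  obtain ⟨b, hba, hb⟩ := (Nat.dvd_prime_pow hp).mp (ha ▸ AddSubgroup.card_dvd_of_le h.le)
  have hne : b ≠ a := fun hab => h.ne (AddSubgroup.eq_of_le_of_card_ge h.le (by rw [ha, hb, hab]))
  rw [ha, hb, ← pow_succ]
  exact pow_dvd_pow p (by omega)

namespace LeftBrace

variable {A : Type*} [AddCommGroup A] (B : LeftBrace A)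

def lam (x : A) : AddMonoid.End A where
  toFun b := B.circ x b - x
  map_zero' := by rw [B.circ_zero, sub_self]
  map_add' b c := by
    rw [eq_sub_of_add_eq (B.compat x b c)]
    abel

theorem lam_apply (x b : A) : B.lam x b = B.circ x b - x := rfl

theorem circ_eq_add_lam (x y : A) : B.circ x y = x + B.lam x y := by
  rw [lam_apply, add_sub_cancel]

theorem star_eq_lam_sub_one (x b : A) : B.star x b = (B.lam x - 1) b := rfl

theorem star_nsmul (x b : A) (m : ℕ) : B.star x (m • b) = m • B.star x b :=
  map_nsmul (B.lam x - 1) m b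

theorem lam_circ (x y : A) : B.lam (B.circ x y) = B.lam x * B.lam y := by
  ext b
  show B.circ (B.circ x y) b - B.circ x y = B.lam x (B.circ y b - y)
  rw [map_sub, lam_apply, lam_apply, B.circ_assoc]
  abel

theorem lam_zero : B.lam 0 = 1 := by
  ext b
  rw [lam_apply, B.zero_circ, sub_zero]
  rfl

theorem circ_inv (x : A) : B.circ x (B.inv x) = 0 :=
  calc B.circ x (B.inv x)
      = B.circ (B.circ (B.inv (B.inv x)) (B.inv x)) (B.circ x (B.inv x)) := by
        rw [B.inv_circ, B.zero_circ]
    _ = B.circ (B.inv (B.inv x)) (B.inv x) := by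
        rw [B.circ_assoc, ← B.circ_assoc (B.inv x), B.inv_circ, B.zero_circ]
    _ = 0 := B.inv_circ _

theorem circ_lam_inv (x t : A) : B.circ x (B.lam (B.inv x) t) = x + t := by
  rw [circ_eq_add_lam, ← Function.comp_apply (f := B.lam x), ← AddMonoid.End.coe_mul,
    ← lam_circ, circ_inv, lam_zero, AddMonoid.End.one_apply]

theorem star_circ_of_lam_eq {x y c : A} (h : B.lam y c = c) :
    B.star (B.circ x y) c = B.star x c := by
  rw [star_eq_lam_sub_one, star_eq_lam_sub_one, lam_circ]
  change B.lam x (B.lam y c) - c = B.lam x c - c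
  rw [h]

theorem lam_circPow (x : A) (m : ℕ) : B.lam (B.circPow x m) = B.lam x ^ m := by
  induction m with
  | zero => exact B.lam_zero
  | succ m ih => rw [circPow, lam_circ, ih, pow_succ']

theorem circPow_eq_sum_range (x : A) (m : ℕ) :
    B.circPow x m = (∑ k ∈ range m, B.lam x ^ k) x := by
  induction m with
  | zero => rfl
  | succ m ih =>
    rw [circPow, circ_eq_add_lam, ih, geom_sum_succ, add_comm]
    rfl

def LamCongrOne (p : ℕ) (x : A) : Prop := ∃ g : AddMonoid.End A, B.lam x = 1 + p * g

namespace LamCongrOne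

variable {B} {p : ℕ} {x y : A}

theorem zero : B.LamCongrOne p 0 := ⟨0, by rw [lam_zero, mul_zero, add_zero]⟩

theorem circ (hx : B.LamCongrOne p x) (hy : B.LamCongrOne p y) :
    B.LamCongrOne p (B.circ x y) := by
  obtain ⟨g, hg⟩ := hx
  obtain ⟨h, hh⟩ := hy
  exact ⟨g + h + g * p * h, by rw [lam_circ, hg, hh]; noncomm_ring⟩

theorem star_mem (hx : B.LamCongrOne p x) (b : A) :
    B.star x b ∈ Set.range (fun z : A => p • z) := by
  obtain ⟨g, hg⟩ := hx
  exact ⟨g b, by rw [star_eq_lam_sub_one, hg, add_sub_cancel_left]; rfl⟩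

theorem star_eq_zero (hx : B.LamCongrOne p x) {u : A} (hu : p • u = 0) : B.star x u = 0 := by
  obtain ⟨g, hg⟩ := hx
  rw [star_eq_lam_sub_one, hg, add_sub_cancel_left, (Nat.cast_commute p g).eq]
  change g ((p : AddMonoid.End A) u) = 0
  rw [AddMonoid.End.natCast_apply, hu, map_zero]

end LamCongrOne

-- `leftSeries d` is `A^{d+1}` in Rump's notation: `A^1 = A`, `A^{k+1} = A * A^k`.
def leftSeries : ℕ → AddSubgroup A
  | 0 => ⊤
  | d + 1 => AddSubgroup.closure {z | ∃ x, ∃ v ∈ leftSeries d, B.star x v = z}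

theorem star_mem_leftSeries_succ {d : ℕ} (x : A) {v : A} (hv : v ∈ B.leftSeries d) :
    B.star x v ∈ B.leftSeries (d + 1) :=
  AddSubgroup.subset_closure ⟨x, v, hv, rfl⟩

theorem leftSeries_succ_le (d : ℕ) : B.leftSeries (d + 1) ≤ B.leftSeries d := by
  induction d with
  | zero => exact le_top
  | succ d ih =>
    rw [leftSeries, AddSubgroup.closure_le]
    rintro _ ⟨x, v, hv, rfl⟩
    exact B.star_mem_leftSeries_succ x (ih hv)

theorem leftSeries_antitone : Antitone B.leftSeries :=
  antitone_nat_of_succ_le B.leftSeries_succ_le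

theorem lam_mem_leftSeries {d : ℕ} (x : A) {v : A} (hv : v ∈ B.leftSeries d) :
    B.lam x v ∈ B.leftSeries d := by
  rw [← sub_add_cancel (B.lam x v) v]
  exact add_mem (B.leftSeries_succ_le d (B.star_mem_leftSeries_succ x hv)) hv

theorem lam_sub_one_pow_apply_mem (x v : A) (k : ℕ) :
    ((B.lam x - 1) ^ k) v ∈ B.leftSeries k := by
  induction k with
  | zero => exact AddSubgroup.mem_top _
  | succ k ih =>
    rw [pow_succ']
    exact B.star_mem_leftSeries_succ x ih

abbrev circGroup : Group A where
  mul := B.circ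
  one := 0
  inv := B.inv
  mul_assoc := B.circ_assoc
  one_mul := B.zero_circ
  mul_one := B.circ_zero
  inv_mul_cancel := B.inv_circ

section Finite

variable [Finite A] {p n : ℕ}

theorem leftSeries_succ_ne (hp : p.Prime) (hcard : Nat.card A = p ^ n) {d : ℕ}
    (hd : B.leftSeries d ≠ ⊥) : B.leftSeries (d + 1) ≠ B.leftSeries d := by
  have := Fact.mk hp
  let _ := B.circGroup
  let V := B.leftSeries d
  let _ : DistribMulAction A V :=
    { smul g v := ⟨B.lam g v.1, B.lam_mem_leftSeries g v.2⟩
      one_smul v := Subtype.ext (by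
        change B.lam 0 v = v
        rw [B.lam_zero]; rfl)
      mul_smul g h v := Subtype.ext (by
        change B.lam (B.circ g h) v = B.lam g (B.lam h v)
        rw [B.lam_circ]; rfl)
      smul_zero g := Subtype.ext (map_zero (B.lam g))
      smul_add g v w := Subtype.ext (map_add (B.lam g) v.1 w.1) }
  have hG : IsPGroup p A := IsPGroup.of_card hcard
  have hV : p ∣ Nat.card V := by
    obtain ⟨k, -, hk⟩ := (Nat.dvd_prime_pow hp).mp (hcard ▸ V.card_addSubgroup_dvd_card)
    rw [hk]
    refine dvd_pow_self p fun hk0 => hd ?_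
    rw [← AddSubgroup.card_eq_one, hk, hk0, pow_zero]
  intro heq
  refine hG.closure_smul_sub_ne_top hV (AddSubgroup.map_injective V.subtype_injective ?_)
  rw [AddMonoidHom.map_closure, ← AddMonoidHom.range_eq_map, AddSubgroup.range_subtype]
  change _ = B.leftSeries d
  rw [← heq, leftSeries]
  congr 1
  ext z
  constructor
  · rintro ⟨_, ⟨g, v, rfl⟩, rfl⟩
    exact ⟨g, v.1, v.2, rfl⟩
  · rintro ⟨g, v, hv, rfl⟩
    exact ⟨_, ⟨g, ⟨v, hv⟩, rfl⟩, rfl⟩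


theorem card_leftSeries_dvd (hp : p.Prime) (hcard : Nat.card A = p ^ n) (d : ℕ) :
    Nat.card (B.leftSeries d) ∣ p ^ (n - d) := by
  induction d with
  | zero => rw [leftSeries, AddSubgroup.card_top, hcard, Nat.sub_zero]
  | succ d ih =>
    by_cases hd : B.leftSeries d = ⊥
    · rw [AddSubgroup.card_eq_one.mpr (le_bot_iff.mp (hd ▸ B.leftSeries_succ_le d))]
      exact one_dvd _
    have hdn : d < n := by
      by_contra! h
      rw [Nat.sub_eq_zero_of_le h, pow_zero, Nat.dvd_one, AddSubgroup.card_eq_one] at ih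
      exact hd ih
    have hlt := (B.leftSeries_succ_le d).lt_of_ne (B.leftSeries_succ_ne hp hcard hd)
    have := (AddSubgroup.card_mul_dvd_card_of_lt hp
      (hcard ▸ AddSubgroup.card_addSubgroup_dvd_card _) hlt).trans ih
    rw [show n - d = n - (d + 1) + 1 by omega, pow_succ] at this
    exact Nat.dvd_of_mul_dvd_mul_right hp.pos this

theorem leftSeries_eq_bot (hp : p.Prime) (hcard : Nat.card A = p ^ n) :
    B.leftSeries n = ⊥ := by
  rw [← AddSubgroup.card_eq_one, ← Nat.dvd_one, ← pow_zero p, ← Nat.sub_self n]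
  exact B.card_leftSeries_dvd hp hcard n

theorem lam_sub_one_pow_eq_zero (hp : p.Prime) (hcard : Nat.card A = p ^ n) (x : A) :
    (B.lam x - 1) ^ n = 0 := by
  ext v
  simpa [B.leftSeries_eq_bot hp hcard] using B.lam_sub_one_pow_apply_mem x v n

end Finite

variable {p : ℕ}

theorem lamCongrOne_circPow (hp : p.Prime) {x : A} (hx : (B.lam x - 1) ^ (p - 1) = 0) :
    B.LamCongrOne p (B.circPow x p) := by
  obtain ⟨T, hT⟩ := exists_sum_range_pow_eq hp hx
  exact ⟨_, by rw [lam_circPow, pow_eq_one_add_of_sum_range_pow_eq hT, mul_assoc]⟩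

theorem circPow_eq_zero (hp : p.Prime) {u : A} (hu₁ : (B.lam u - 1) ^ (p - 1) = 0)
    (hu : p • u = 0) : B.circPow u p = 0 := by
  obtain ⟨T, hT⟩ := exists_sum_range_pow_eq hp hu₁
  rw [circPow_eq_sum_range, hT, AddMonoid.End.coe_mul, Function.comp_apply,
    AddMonoid.End.natCast_apply, ← map_nsmul, hu, map_zero]

theorem star_nsmul_eq_zero (hp : p.Prime) {u : A} (hu₁ : (B.lam u - 1) ^ (p - 1) = 0)
    (hu : p • u = 0) (b : A) : B.star u (p • b) = 0 := by
  have h : (p : AddMonoid.End A) * (B.lam u - 1) = 0 := by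
    refine natCast_mul_sub_one_eq_zero_of_pow_eq_one hp hu₁ ?_
    rw [← lam_circPow, B.circPow_eq_zero hp hu₁ hu, lam_zero]
  change ((B.lam u - 1) * (p : AddMonoid.End A)) b = 0
  rw [← (Nat.cast_commute p _).eq, h]
  rfl

theorem exists_nsmul_eq_circ (hp : p.Prime) {a : A} (ha₁ : (B.lam a - 1) ^ (p - 1) = 0)
    {d : ℕ} (ha : a ∈ B.leftSeries d) :
    ∃ a₁ ∈ B.leftSeries (d + 1), p • a = B.circ (B.circPow a p) (p • a₁) := by
  obtain ⟨T, hT⟩ := exists_sum_range_pow_eq hp ha₁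
  -- `a^{∘p} = p • a + p • f (T(f) a)` for `f = λ_a - 1`, and `f (T(f) a)` is one step deeper.
  set f := B.lam a - 1
  have hfT : f (aeval f T a) ∈ B.leftSeries (d + 1) := by
    rw [← Function.comp_apply (f := f), ← AddMonoid.End.coe_mul, (commute_aeval_self f T).eq]
    refine Set.MapsTo.aeval (fun v hv => ?_) T (B.star_mem_leftSeries_succ a ha)
    exact B.leftSeries_succ_le _ (B.star_mem_leftSeries_succ a hv)
  refine ⟨B.lam (B.inv (B.circPow a p)) (-f (aeval f T a)),
    B.lam_mem_leftSeries _ (neg_mem hfT), ?_⟩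
  rw [← map_nsmul, circ_lam_inv, smul_neg, circPow_eq_sum_range, hT]
  change p • a = p • (a + f (aeval f T a)) + -(p • f (aeval f T a))
  rw [smul_add, add_neg_cancel_right]

theorem lamCongrOne_nsmul (hp : p.Prime) (hnil : ∀ x : A, (B.lam x - 1) ^ (p - 1) = 0)
    {N : ℕ} (hN : B.leftSeries N = ⊥) (a : A) : B.LamCongrOne p (p • a) := by
  suffices h : ∀ k, ∀ a ∈ B.leftSeries (N - k), B.LamCongrOne p (p • a) from
    h N a (by rw [Nat.sub_self]; exact AddSubgroup.mem_top a)
  intro k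
  induction k with
  | zero =>
    intro a ha
    rw [Nat.sub_zero, hN, AddSubgroup.mem_bot] at ha
    rw [ha, smul_zero]
    exact LamCongrOne.zero
  | succ k ih =>
    intro a ha
    obtain ⟨a₁, ha₁, h⟩ := B.exists_nsmul_eq_circ hp (hnil a) ha
    rw [h]
    exact (B.lamCongrOne_circPow hp (hnil a)).circ (ih a₁ (B.leftSeries_antitone (by omega) ha₁))

theorem star_nsmul_nsmul_eq (hp : p.Prime) (hnil : ∀ x : A, (B.lam x - 1) ^ (p - 1) = 0)
    {N : ℕ} (hN : B.leftSeries N = ⊥) {a a' b b' : A} (ha : p ^ 2 • (a - a') = 0)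
    (hb : p ^ 2 • (b - b') = 0) : B.star (p • a) (p • b) = B.star (p • a') (p • b') := by
  -- `p • a = (p • a') ∘ y` with `p • y = 0`, and `λ_y` fixes `pA`.
  set y := B.lam (B.inv (p • a')) (p • (a - a'))
  have hy : p • y = 0 := by rw [← map_nsmul, smul_smul, ← pow_two, ha, map_zero]
  have hsplit : p • a = B.circ (p • a') y := by rw [circ_lam_inv, smul_sub, add_sub_cancel]
  have hb' : p • (p • b - p • b') = 0 := by rw [← smul_sub, smul_smul, ← pow_two, hb]
  have hlam : B.lam y (p • b') = p • b' :=
    sub_eq_zero.mp (B.star_nsmul_eq_zero hp (hnil y) hy b')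
  rw [← sub_add_cancel (p • b) (p • b'), star_eq_lam_sub_one, map_add, ← star_eq_lam_sub_one,
    ← star_eq_lam_sub_one, (B.lamCongrOne_nsmul hp hnil hN a).star_eq_zero hb', zero_add,
    hsplit, B.star_circ_of_lam_eq hlam]

end LeftBrace

/-- Let A be a brace of cardinality p^n, p > n + 1 prime, and ℘⁻¹ : pA → A a section of
multiplication by p.  The operation [a] ⊙ [b] = [℘⁻¹((pa) * b)] on A/ann(p²) is
well defined: if [a] = [a'] and [b] = [b'] then [℘⁻¹((pa)*b)] = [℘⁻¹((pa')*b')]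
(cosets [x] = [y] meaning p²(x - y) = 0). -/
theorem stmt10 {A : Type*} [AddCommGroup A] [Fintype A] (B : LeftBrace A) (p n : ℕ)
    (hp : p.Prime) (hpn : n + 1 < p) (hcard : Fintype.card A = p ^ n)
    (winv : A → A) (hwinv : ∀ a ∈ Set.range (fun x : A => p • x), p • winv a = a)
    (a a' b b' : A) (ha : p ^ 2 • (a - a') = 0) (hb : p ^ 2 • (b - b') = 0) :
    p ^ 2 • (winv (B.star (p • a) b) - winv (B.star (p • a') b')) = 0 := by
  have hA : Nat.card A = p ^ n := by rw [Nat.card_eq_fintype_card, hcard]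
  have hN := B.leftSeries_eq_bot hp hA
  have hnil (x : A) : (B.lam x - 1) ^ (p - 1) = 0 :=
    pow_eq_zero_of_le (by omega) (B.lam_sub_one_pow_eq_zero hp hA x)
  have hwinv' (c : A) (hc : c ∈ Set.range (fun x : A => p • x)) : p ^ 2 • winv c = p • c := by
    rw [pow_two, mul_nsmul, hwinv c hc]
  rw [smul_sub, hwinv' _ ((B.lamCongrOne_nsmul hp hnil hN a).star_mem b),
    hwinv' _ ((B.lamCongrOne_nsmul hp hnil hN a').star_mem b'), ← B.star_nsmul, ← B.star_nsmul,
    B.star_nsmul_nsmul_eq hp hnil hN ha hb, sub_self]
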